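/- For any two permutations π, σ ∈ S_n: ls_D(π) = ls_D(σ) for all D ⊆ [n−1] if and only if for all 1 ≤ i ≤ j ≤ n, the factors π_{[i,j]} and σ_{[i,j]} have equal longest increasing subsequence lengths and equal longest decreasing subsequence lengths. -/

import Mathlib

open List Finset

variable {α : Type*}

/-- The (1-based) descent set of a finite sequence, as a `Finset ℕ`. -/
def desSet [LinearOrder α] [Inhabited α] (l : List α) : Finset ℕ :=
  (Finset.Icc 1 (l.length - 1)).filter (fun i => l.getD i default < l.getD (i - 1) default)

/-- The number of descents of a finite sequence. -/
def desNum [LinearOrder α] [Inhabited α] (l : List α) : ℕ := (desSet l).card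

/-- The number of ascents of a finite sequence. -/
def ascNum [LinearOrder α] [Inhabited α] (l : List α) : ℕ :=
  ((Finset.Icc 1 (l.length - 1)).filter (fun i => l.getD (i - 1) default < l.getD i default)).card

/-- `lsd w d` : the maximum length of a subsequence of `w` with exactly `d` descents
(`0` if there is none). -/
noncomputable def lsd [LinearOrder α] [Inhabited α] (w : List α) (d : ℕ) : ℕ :=
  sSup {m | ∃ s : List α, s.Sublist w ∧ desNum s = d ∧ s.length = m}

/-- `lsD w D` : the maximum length of a subsequence of `w` whose descent set is exactly `D`
(`0` if there is none). -/
noncomputable def lsD [LinearOrder α] [Inhabited α] (w : List α) (D : Finset ℕ) : ℕ :=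
  sSup {m | ∃ s : List α, s.Sublist w ∧ desSet s = D ∧ s.length = m}

/-- The length of a longest (strictly) increasing subsequence. -/
noncomputable def lis [LinearOrder α] (w : List α) : ℕ :=
  sSup {m | ∃ s : List α, s.Sublist w ∧ s.Pairwise (· < ·) ∧ s.length = m}

/-- The length of a longest (strictly) decreasing subsequence. -/
noncomputable def lds [LinearOrder α] (w : List α) : ℕ :=
  sSup {m | ∃ s : List α, s.Sublist w ∧ s.Pairwise (· > ·) ∧ s.length = m}

/-- The one-line notation word of a permutation of `Fin n` (with values in `ℕ`). -/
def word {n : ℕ} (π : Equiv.Perm (Fin n)) : List ℕ := List.ofFn (fun i => (π i : ℕ))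

/-- The factor `w_{[a, b]}` of a word `w` (positions `a` through `b`, 1-based). -/
def factor (w : List α) (a b : ℕ) : List α := (w.drop (a - 1)).take (b - a + 1)

/-!
Both directions compare subsequences through their descent sets, and each holds one-sidedly:
`ls_D(π) ≤ ls_D(σ)` for all `D` iff `is` and `ds` of every factor of `π` are at most those of `σ`.

If `r` is a monotone subsequence of `π_{[i,j]}`, pad it with all of `π` outside `[i, j]`. A
subsequence of `σ` with the same length and descent set has `|π| - (j - i + 1)` other entries, so
its window of positions `i, …, i + |r| - 1` lies in `σ_{[i,j]}` and has the descent set of `r`.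

Conversely, a subsequence `s` of a prefix of `π` is rebuilt in the same prefix of `σ` by induction
on its length. Cut `s` at the first entry of its last maximal run; the body is rebuilt by
induction, the run inside a factor of `σ` from `is`/`ds`. The two overlap in one entry, so to glue
them one drops either the last entry of the body or the first entry of the run, according to how
the last entry of the body compares with the second entry of the run.
-/

namespace List

theorem getD_drop (l : List α) (k i : ℕ) (d : α) : (l.drop k).getD i d = l.getD (k + i) d := by
  simp [getD_eq_getElem?_getD]

theorem getD_take_of_lt {l : List α} {k i : ℕ} (d : α) (h : i < k) :
    (l.take k).getD i d = l.getD i d := by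
  simp [getD_eq_getElem?_getD, h]

theorem Sublist.take_sublist_take_length_sub_add {u v : List α} (h : u <+ v) (m : ℕ) :
    u.take m <+ v.take (v.length - u.length + m) := by
  induction h generalizing m with
  | slnil => simp
  | @cons u v a h ih =>
    have hk : v.length + 1 - u.length + m = (v.length - u.length + m) + 1 := by
      have := h.length_le
      omega
    rw [length_cons, hk, take_succ_cons]
    exact (ih m).cons a
  | @cons_cons u v a h ih =>
    cases m with
    | zero => simp
    | succ m =>
      simpa [← Nat.add_assoc, Nat.sub_add_comm h.length_le] using (ih m).cons_cons a

theorem Sublist.dropLast {u v : List α} (h : u <+ v) : u.dropLast <+ v.dropLast := by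
  by_cases hu : u = []
  · simp [hu]
  · have := h.take_sublist_take_length_sub_add (u.length - 1)
    rwa [← Nat.add_sub_assoc (length_pos_of_ne_nil hu), Nat.sub_add_cancel h.length_le,
      ← dropLast_eq_take, ← dropLast_eq_take] at this

theorem exists_of_append_cons_sublist {u v W : List α} {y : α} (h : u ++ y :: v <+ W) :
    ∃ U V, W = U ++ y :: V ∧ u <+ U ∧ v <+ V := by
  obtain ⟨W₁, W₂, rfl, hu, hyv⟩ := append_sublist_iff.1 h
  obtain ⟨W₃, W₄, rfl, hy, hv⟩ := cons_sublist_iff.1 hyv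
  obtain ⟨U, V, rfl⟩ := append_of_mem hy
  exact ⟨W₁ ++ U, V ++ W₄, by simp, hu.trans (sublist_append_left _ _),
    hv.trans (sublist_append_right _ _)⟩

end List

section Descents

variable [LinearOrder α] [Inhabited α]

theorem mem_desSet {l : List α} {i : ℕ} :
    i ∈ desSet l ↔ 1 ≤ i ∧ i < l.length ∧ l.getD i default < l.getD (i - 1) default := by
  simp only [desSet, Finset.mem_filter, Finset.mem_Icc]
  constructor
  · rintro ⟨⟨h1, h2⟩, h3⟩
    exact ⟨h1, by omega, h3⟩
  · rintro ⟨h1, h2, h3⟩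
    exact ⟨⟨h1, by omega⟩, h3⟩

theorem succ_mem_desSet_iff {l : List α} {i : ℕ} (h : i + 1 < l.length) :
    i + 1 ∈ desSet l ↔ l[i + 1] < l[i] := by
  rw [mem_desSet, getD_eq_getElem _ _ h, Nat.add_sub_cancel, getD_eq_getElem _ _ (by omega)]
  simp [h]

theorem desSet_subset_Icc (l : List α) : desSet l ⊆ Icc 1 (l.length - 1) :=
  filter_subset _ _

theorem desSet_take (l : List α) (k : ℕ) : desSet (l.take k) = desSet l ∩ Icc 1 (k - 1) := by
  ext i
  simp only [mem_desSet, mem_inter, mem_Icc, length_take]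
  constructor
  · rintro ⟨h1, h2, h3⟩
    rw [getD_take_of_lt _ (by omega), getD_take_of_lt _ (by omega)] at h3
    exact ⟨⟨h1, by omega, h3⟩, h1, by omega⟩
  · rintro ⟨⟨h1, h2, h3⟩, -, h4⟩
    refine ⟨h1, by omega, ?_⟩
    rwa [getD_take_of_lt _ (by omega), getD_take_of_lt _ (by omega)]

theorem mem_desSet_drop {l : List α} {k i : ℕ} :
    i ∈ desSet (l.drop k) ↔ 1 ≤ i ∧ k + i ∈ desSet l := by
  simp only [mem_desSet, length_drop, getD_drop]
  constructor
  · rintro ⟨h1, h2, h3⟩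
    exact ⟨h1, by omega, by omega, by rwa [show k + i - 1 = k + (i - 1) by omega]⟩
  · rintro ⟨h1, -, h2, h3⟩
    exact ⟨h1, by omega, by rwa [show k + i - 1 = k + (i - 1) by omega] at h3⟩

theorem desSet_drop_take_congr {s t : List α} (h : desSet t = desSet s) (k m : ℕ) :
    desSet ((t.drop k).take m) = desSet ((s.drop k).take m) := by
  ext i
  simp only [desSet_take, mem_inter, mem_desSet_drop, h]

theorem mem_desSet_append_of_lt {u v : List α} {i : ℕ} (h : i < u.length) :
    i ∈ desSet (u ++ v) ↔ i ∈ desSet u := by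
  simp only [mem_desSet, length_append, getD_append _ _ _ _ h,
    getD_append _ _ _ (i - 1) (by omega : i - 1 < u.length)]
  constructor
  · rintro ⟨h1, -, h3⟩
    exact ⟨h1, h, h3⟩
  · rintro ⟨h1, -, h3⟩
    exact ⟨h1, by omega, h3⟩

theorem length_mem_desSet_append {u v : List α} (hu : u ≠ []) (hv : v ≠ []) :
    u.length ∈ desSet (u ++ v) ↔ v.getD 0 default < u.getD (u.length - 1) default := by
  have hu' := length_pos_of_ne_nil hu
  have hv' := length_pos_of_ne_nil hv
  rw [mem_desSet, getD_append_right _ _ _ _ le_rfl, Nat.sub_self,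
    getD_append _ _ _ _ (by omega : u.length - 1 < u.length)]
  simp [hu', hv', Nat.one_le_iff_ne_zero.mpr hu'.ne']

theorem mem_desSet_append_of_gt {u v : List α} {i : ℕ} (h : u.length < i) :
    i ∈ desSet (u ++ v) ↔ i - u.length ∈ desSet v := by
  simp only [mem_desSet, length_append, getD_append_right _ _ _ _ h.le,
    getD_append_right _ _ _ (i - 1) (by omega : u.length ≤ i - 1)]
  constructor
  · rintro ⟨-, h2, h3⟩
    exact ⟨by omega, by omega, by rwa [show i - u.length - 1 = i - 1 - u.length by omega]⟩
  · rintro ⟨-, h2, h3⟩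
    exact ⟨by omega, by omega, by rwa [show i - u.length - 1 = i - 1 - u.length by omega] at h3⟩

theorem desSet_eq_empty_iff {l : List α} (hl : l.Nodup) : desSet l = ∅ ↔ l.Pairwise (· < ·) := by
  constructor
  · intro h
    refine isChain_iff_pairwise.1 (isChain_iff_getElem.2 fun i hi => ?_)
    have hnot : i + 1 ∉ desSet l := by simp [h]
    rw [succ_mem_desSet_iff hi, not_lt] at hnot
    exact hnot.lt_of_ne fun heq => by simpa using (hl.getElem_inj_iff).1 heq
  · intro h
    refine eq_empty_of_forall_notMem fun i hi => ?_
    obtain ⟨h1, h2, -⟩ := mem_desSet.1 hi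
    obtain ⟨j, rfl⟩ : ∃ j, i = j + 1 := ⟨i - 1, by omega⟩
    exact (succ_mem_desSet_iff h2).1 hi |>.not_gt
      (pairwise_iff_getElem.1 h j (j + 1) (by omega) h2 (by omega))

theorem desSet_eq_Icc_iff {l : List α} :
    desSet l = Icc 1 (l.length - 1) ↔ l.Pairwise (· > ·) := by
  constructor
  · intro h
    refine isChain_iff_pairwise.1 (isChain_iff_getElem.2 fun i hi => ?_)
    exact (succ_mem_desSet_iff hi).1 (h ▸ mem_Icc.2 ⟨by omega, by omega⟩)
  · intro h
    refine (desSet_subset_Icc l).antisymm fun i hi => ?_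
    obtain ⟨j, rfl⟩ : ∃ j, i = j + 1 := ⟨i - 1, by simp at hi; omega⟩
    have hj : j + 1 < l.length := by simp at hi; omega
    exact (succ_mem_desSet_iff hj).2 (pairwise_iff_getElem.1 h j (j + 1) (by omega) hj (by omega))

end Descents

section LongestSubsequences

theorem bddAbove_sublist_lengths (p : List α → Prop) (w : List α) :
    BddAbove {m | ∃ s, s <+ w ∧ p s ∧ s.length = m} :=
  ⟨w.length, by rintro _ ⟨s, hs, -, rfl⟩; exact hs.length_le⟩

theorem le_sSup_length {p : List α → Prop} {w s : List α} (hs : s <+ w) (hp : p s) :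
    s.length ≤ sSup {m | ∃ s, s <+ w ∧ p s ∧ s.length = m} :=
  le_csSup (bddAbove_sublist_lengths p w) ⟨s, hs, hp, rfl⟩

theorem exists_le_length_of_le_sSup {p : List α → Prop} {w : List α} {m : ℕ} (hm : 0 < m)
    (h : m ≤ sSup {m | ∃ s, s <+ w ∧ p s ∧ s.length = m}) :
    ∃ s, s <+ w ∧ p s ∧ m ≤ s.length := by
  have hne : {m | ∃ s, s <+ w ∧ p s ∧ s.length = m}.Nonempty := by
    by_contra hempty
    rw [Set.not_nonempty_iff_eq_empty.1 hempty, csSup_empty, Nat.bot_eq_zero] at h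
    omega
  obtain ⟨s, hs, hp, hlen⟩ := Nat.sSup_mem hne (bddAbove_sublist_lengths p w)
  exact ⟨s, hs, hp, hlen ▸ h⟩

theorem exists_pairwise_of_le_sSup {R : α → α → Prop} {w : List α} {m : ℕ}
    (h : m ≤ sSup {m | ∃ s, s <+ w ∧ s.Pairwise R ∧ s.length = m}) :
    ∃ s, s <+ w ∧ s.Pairwise R ∧ s.length = m := by
  rcases Nat.eq_zero_or_pos m with rfl | hm
  · exact ⟨[], nil_sublist w, Pairwise.nil, rfl⟩
  obtain ⟨s, hs, hR, hlen⟩ := exists_le_length_of_le_sSup hm h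
  exact ⟨s.take m, (take_sublist m s).trans hs, hR.sublist (take_sublist m s), by simp; omega⟩

variable [LinearOrder α]

theorem le_lis {w s : List α} (hs : s <+ w) (h : s.Pairwise (· < ·)) : s.length ≤ lis w :=
  le_sSup_length hs h

theorem exists_of_le_lis {w : List α} {m : ℕ} (h : m ≤ lis w) :
    ∃ s, s <+ w ∧ s.Pairwise (· < ·) ∧ s.length = m :=
  exists_pairwise_of_le_sSup h

theorem le_lds {w s : List α} (hs : s <+ w) (h : s.Pairwise (· > ·)) : s.length ≤ lds w :=
  le_sSup_length hs h

theorem exists_of_le_lds {w : List α} {m : ℕ} (h : m ≤ lds w) :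
    ∃ s, s <+ w ∧ s.Pairwise (· > ·) ∧ s.length = m :=
  exists_pairwise_of_le_sSup h

variable [Inhabited α]

theorem le_lsD {w s : List α} (hs : s <+ w) : s.length ≤ lsD w (desSet s) :=
  le_sSup_length hs rfl

theorem exists_of_le_lsD {w : List α} {D : Finset ℕ} {m : ℕ} (hm : 0 < m) (h : m ≤ lsD w D) :
    ∃ s, s <+ w ∧ desSet s = D ∧ m ≤ s.length :=
  exists_le_length_of_le_sSup hm h

end LongestSubsequences

section Runs

variable [LinearOrder α] [Inhabited α]

def IsRun (r : List α) : Prop :=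
  ∃ P : Prop, ∀ d, d ∈ desSet r ↔ d ∈ Icc 1 (r.length - 1) ∧ P

theorem isRun_iff {r : List α} : IsRun r ↔ desSet r = ∅ ∨ desSet r = Icc 1 (r.length - 1) := by
  constructor
  · rintro ⟨P, h⟩
    by_cases hP : P
    · exact Or.inr (Finset.ext fun d => by simp [h, hP])
    · exact Or.inl (Finset.ext fun d => by simp [h, hP])
  · rintro (h | h)
    · exact ⟨False, fun d => by simp [h]⟩
    · exact ⟨True, fun d => by simp [h]⟩

theorem lis_le_and_lds_le_iff {u u' : List α} (hu : u.Nodup) (hu' : u'.Nodup) :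
    lis u ≤ lis u' ∧ lds u ≤ lds u' ↔
      ∀ r, r <+ u → IsRun r → ∃ r', r' <+ u' ∧ desSet r' = desSet r ∧ r'.length = r.length := by
  constructor
  · rintro ⟨hlis, hlds⟩ r hr hrun
    rcases isRun_iff.1 hrun with h | h
    · obtain ⟨r', hr', hinc, hlen⟩ :=
        exists_of_le_lis ((le_lis hr ((desSet_eq_empty_iff (hr.nodup hu)).1 h)).trans hlis)
      exact ⟨r', hr', by rw [h, desSet_eq_empty_iff (hr'.nodup hu')]; exact hinc, hlen⟩
    · obtain ⟨r', hr', hdec, hlen⟩ :=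
        exists_of_le_lds ((le_lds hr (desSet_eq_Icc_iff.1 h)).trans hlds)
      exact ⟨r', hr', by rw [h, desSet_eq_Icc_iff.2 hdec, hlen], hlen⟩
  · intro h
    constructor
    · obtain ⟨r, hr, hinc, hlen⟩ := exists_of_le_lis (le_refl (lis u))
      have hdes := (desSet_eq_empty_iff (hr.nodup hu)).2 hinc
      obtain ⟨r', hr', hdes', hlen'⟩ := h r hr (isRun_iff.2 (Or.inl hdes))
      rw [← hlen, ← hlen']
      exact le_lis hr' ((desSet_eq_empty_iff (hr'.nodup hu')).1 (hdes'.trans hdes))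
    · obtain ⟨r, hr, hdec, hlen⟩ := exists_of_le_lds (le_refl (lds u))
      have hdes := desSet_eq_Icc_iff.2 hdec
      obtain ⟨r', hr', hdes', hlen'⟩ := h r hr (isRun_iff.2 (Or.inr hdes))
      rw [← hlen, ← hlen']
      exact le_lds hr' (desSet_eq_Icc_iff.1 (by rw [hdes', hdes, hlen']))

end Runs

section Factors

theorem factor_sublist (w : List α) (i j : ℕ) : factor w i j <+ w :=
  (take_sublist _ _).trans (drop_sublist _ _)

theorem factor_eq_drop_take (w : List α) {i j : ℕ} (hi : 1 ≤ i) (hij : i ≤ j) :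
    factor w i j = (w.take j).drop (i - 1) := by
  rw [factor, drop_take, show j - (i - 1) = j - i + 1 by omega]

theorem factor_append_drop (w : List α) {i j : ℕ} (hi : 1 ≤ i) (hij : i ≤ j) :
    factor w i j ++ w.drop j = w.drop (i - 1) := by
  conv_rhs => rw [← take_append_drop (j - i + 1) (w.drop (i - 1))]
  rw [drop_drop, show i - 1 + (j - i + 1) = j by omega, factor]

variable [LinearOrder α] [Inhabited α]

theorem exists_sublist_factor_of_lsD_le {w w' r : List α} {i j : ℕ}
    (hlen : w'.length = w.length) (hle : ∀ D ⊆ Icc 1 (w.length - 1), lsD w D ≤ lsD w' D)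
    (hi : 1 ≤ i) (hij : i ≤ j) (hj : j ≤ w.length) (hr : r <+ factor w i j) :
    ∃ r', r' <+ factor w' i j ∧ desSet r' = desSet r ∧ r'.length = r.length := by
  rcases Nat.eq_zero_or_pos r.length with hr0 | hrpos
  · exact ⟨[], nil_sublist _, by simp [length_eq_zero_iff.1 hr0], by simp [hr0]⟩
  have hrlen : r.length ≤ j - i + 1 := hr.length_le.trans (by simp [factor])
  set s := w.take (i - 1) ++ (r ++ w.drop j) with hs_def
  have hs : s <+ w := by
    have := (Sublist.refl (w.take (i - 1))).append (hr.append (Sublist.refl (w.drop j)))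
    rwa [factor_append_drop w hi hij, take_append_drop] at this
  have hslen : s.length = w.length - (j - i + 1) + r.length := by
    simp only [hs_def, length_append, length_take, length_drop]
    omega
  obtain ⟨t₀, ht₀, hdes₀, hlen₀⟩ := exists_of_le_lsD (by omega : 0 < s.length)
    ((le_lsD hs).trans (hle _ ((desSet_subset_Icc s).trans
      (Icc_subset_Icc le_rfl (Nat.sub_le_sub_right hs.length_le 1)))))
  set t := t₀.take s.length
  have ht : t <+ w' := (take_sublist _ _).trans ht₀
  have htdes : desSet t = desSet s := by
    rw [desSet_take, hdes₀, inter_eq_left.2 (desSet_subset_Icc s)]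
  have htlen : t.length = s.length := by simp [t, hlen₀]
  refine ⟨(t.drop (i - 1)).take r.length, ?_, ?_, by simp; omega⟩
  · have := (ht.drop (i - 1)).take_sublist_take_length_sub_add r.length
    rwa [length_drop, length_drop, htlen, hslen, hlen,
      show w.length - (i - 1) - (w.length - (j - i + 1) + r.length - (i - 1)) + r.length
        = j - i + 1 by omega] at this
  · rw [desSet_drop_take_congr htdes, hs_def, drop_left' (by simp; omega), take_left' rfl]

end Factors

theorem lt_iff_of_lt_iff_of_lt_iff [LinearOrder α] {a b c : α} {Q : Prop} (hab : b < a ↔ Q)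
    (hbc : c < b ↔ Q) : c < a ↔ Q := by
  by_cases hQ : Q
  · exact iff_of_true ((hbc.2 hQ).trans (hab.2 hQ)) hQ
  · exact iff_of_false (not_lt.2 ((not_lt.1 (mt hab.1 hQ)).trans (not_lt.1 (mt hbc.1 hQ)))) hQ

section Gluing

variable [LinearOrder α] [Inhabited α]

theorem mem_desSet_append_drop_one {a B : List α} {P : Prop} (ha : a ≠ []) (hB2 : 2 ≤ B.length)
    (hB : ∀ d, d ∈ desSet B ↔ d ∈ Icc 1 (B.length - 1) ∧ P)
    (hjunction : B.getD 1 default < a.getD (a.length - 1) default ↔ P) (d : ℕ) :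
    d ∈ desSet (a ++ B.drop 1) ↔
      d ∈ desSet a ∨ (a.length ≤ d ∧ d < a.length + B.length - 1 ∧ P) := by
  have hdesa : ∀ d, a.length ≤ d → d ∉ desSet a := fun d hd hmem => by
    have := mem_Icc.1 (desSet_subset_Icc a hmem)
    omega
  rcases lt_trichotomy d a.length with hd | rfl | hd
  · rw [mem_desSet_append_of_lt hd]
    simp [not_le.2 hd]
  · rw [length_mem_desSet_append ha (ne_nil_of_length_pos (by simp; omega)), getD_drop,
      Nat.add_zero]
    exact hjunction.trans ⟨fun hP => Or.inr ⟨le_rfl, by omega, hP⟩,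
      fun h => (h.resolve_left (hdesa _ le_rfl)).2.2⟩
  · rw [mem_desSet_append_of_gt hd, mem_desSet_drop, hB, mem_Icc]
    by_cases hP : P
    · simp [hP, hdesa d hd.le]
      omega
    · simp [hP, hdesa d hd.le]

theorem mem_desSet_dropLast_append {a B : List α} {P : Prop} (ha2 : 2 ≤ a.length) (hB0 : B ≠ [])
    (hB : ∀ d, d ∈ desSet B ↔ d ∈ Icc 1 (B.length - 1) ∧ P)
    (hswitch : a.length - 1 ∈ desSet a ↔ ¬P)
    (hjunction : B.getD 0 default < a.getD (a.length - 2) default ↔ ¬P) (d : ℕ) :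
    d ∈ desSet (a.dropLast ++ B) ↔
      d ∈ desSet a ∨ (a.length ≤ d ∧ d < a.length + B.length - 1 ∧ P) := by
  have hdesa : ∀ d, a.length ≤ d → d ∉ desSet a := fun d hd hmem => by
    have := mem_Icc.1 (desSet_subset_Icc a hmem)
    omega
  have hlen : a.dropLast.length = a.length - 1 := length_dropLast
  rcases lt_trichotomy d (a.length - 1) with hd | hd | hd
  · rw [mem_desSet_append_of_lt (hlen ▸ hd), dropLast_eq_take, desSet_take, Finset.mem_inter]
    refine ⟨fun h => Or.inl h.1, fun h => ?_⟩
    have hda := h.resolve_right fun h' => absurd h'.1 (by omega)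
    exact ⟨hda, mem_Icc.2 ⟨(mem_Icc.1 (desSet_subset_Icc a hda)).1, by omega⟩⟩
  · subst hd
    rw [← hlen, length_mem_desSet_append (ne_nil_of_length_pos (by omega)) hB0, hlen,
      dropLast_eq_take, getD_take_of_lt _ (by omega), show a.length - 1 - 1 = a.length - 2 by omega]
    exact hjunction.trans (hswitch.symm.trans
      ⟨Or.inl, fun h => h.resolve_right fun h' => absurd h'.1 (by omega)⟩)
  · rw [mem_desSet_append_of_gt (hlen ▸ hd), hlen, hB, mem_Icc]
    by_cases hP : P
    · simp [hP, hdesa d (by omega)]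
      omega
    · simp [hP, hdesa d (by omega)]

theorem exists_sublist_glue {W a B : List α} {γ : ℕ} {P : Prop}
    (ha : a <+ W.take γ) (hB : B <+ W.drop (γ - 1)) (ha2 : 2 ≤ a.length) (hB2 : 2 ≤ B.length)
    (hBnd : B.Nodup) (hswitch : a.length - 1 ∈ desSet a ↔ ¬P)
    (hrun : ∀ d, d ∈ desSet B ↔ d ∈ Icc 1 (B.length - 1) ∧ P) :
    ∃ t, t <+ W ∧ t.length = a.length + B.length - 1 ∧
      ∀ d, d ∈ desSet t ↔ d ∈ desSet a ∨ (a.length ≤ d ∧ d < a.length + B.length - 1 ∧ P) := by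
  have hγ : a.length ≤ γ := ha.length_le.trans (length_take_le _ _)
  have hγW : γ < W.length := by
    have := hB.length_le
    simp only [length_drop] at this
    omega
  set p := a.getD (a.length - 2) default
  set q := a.getD (a.length - 1) default
  set b₀ := B.getD 0 default
  set b₁ := B.getD 1 default
  have hqp : q < p ↔ ¬P := by
    rw [← hswitch, mem_desSet, show a.length - 1 - 1 = a.length - 2 by omega]
    exact ⟨fun h => ⟨by omega, by omega, h⟩, fun h => h.2.2⟩
  have hb₁b₀ : b₁ < b₀ ↔ P := by
    have h1 := (hrun 1).symm.trans mem_desSet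
    exact ⟨fun h => (h1.2 ⟨le_rfl, by omega, h⟩).2,
      fun hP => (h1.1 ⟨mem_Icc.2 ⟨le_rfl, by omega⟩, hP⟩).2.2⟩
  have hb₀₁ : b₀ ≠ b₁ := by
    simp only [b₀, b₁, getD_eq_getElem _ _ (by omega : 0 < B.length),
      getD_eq_getElem _ _ (by omega : 1 < B.length)]
    exact fun h => by simpa using hBnd.getElem_inj_iff.1 h
  by_cases hjunction : b₁ < q ↔ P
  · refine ⟨a ++ B.drop 1, ?_, by simp; omega,
      mem_desSet_append_drop_one (ne_nil_of_length_pos (by omega)) hB2 hrun hjunction⟩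
    have := ha.append (hB.drop 1)
    rwa [drop_drop, show γ - 1 + 1 = γ by omega, take_append_drop] at this
  · -- `p, q, b₁, b₀` are then monotone against the run, so `b₀` can directly follow `p`.
    have hb₀p : b₀ < p ↔ ¬P := lt_iff_of_lt_iff_of_lt_iff
      (lt_iff_of_lt_iff_of_lt_iff hqp (by tauto))
      ⟨fun h hP => lt_asymm h (hb₁b₀.2 hP),
        fun hP => lt_of_le_of_ne (not_lt.1 (mt hb₁b₀.1 hP)) hb₀₁⟩
    refine ⟨a.dropLast ++ B, ?_, by simp; omega,
      mem_desSet_dropLast_append ha2 (ne_nil_of_length_pos (by omega)) hrun hswitch hb₀p⟩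
    have := ha.dropLast.append hB
    rwa [dropLast_take (by omega), take_append_drop] at this

end Gluing

theorem forall_or_exists_last_not (Q : ℕ → Prop) (m : ℕ) :
    (∀ d, 1 ≤ d → d ≤ m → Q d) ∨ ∃ e, 1 ≤ e ∧ e ≤ m ∧ ¬Q e ∧ ∀ d, e < d → d ≤ m → Q d := by
  induction m with
  | zero => exact Or.inl fun d h1 h2 => absurd h1 (by omega)
  | succ m ih =>
    by_cases hQ : Q (m + 1)
    · refine ih.imp (fun h d h1 h2 => ?_) fun ⟨e, he1, he2, he3, he4⟩ =>
        ⟨e, he1, by omega, he3, fun d h1 h2 => ?_⟩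
      · rcases Nat.lt_or_eq_of_le h2 with h2 | rfl
        exacts [h d h1 (by omega), hQ]
      · rcases Nat.lt_or_eq_of_le h2 with h2 | rfl
        exacts [he4 d h1 (by omega), hQ]
    · exact Or.inr ⟨m + 1, by omega, le_rfl, hQ, fun d h1 h2 => absurd h1 (by omega)⟩

theorem exists_sublist_take_and_sublist_factor {w s : List α} {c e : ℕ} (hs : s <+ w.take c)
    (he : e < s.length) :
    ∃ γ, 1 ≤ γ ∧ γ ≤ c ∧ s.take (e + 1) <+ w.take γ ∧ s.drop e <+ factor w γ c := by
  have hsplit : s = s.take e ++ s[e] :: s.drop (e + 1) := by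
    rw [getElem_cons_drop, take_append_drop]
  obtain ⟨U, V, hUV, hU, hV⟩ := exists_of_append_cons_sublist (hsplit ▸ hs)
  have hγc : U.length + 1 ≤ c := by
    have := congrArg length hUV
    simp only [length_take, length_append, length_cons] at this
    omega
  refine ⟨U.length + 1, by omega, hγc, ?_, ?_⟩
  · rw [← min_eq_left hγc, ← take_take, hUV, take_length_add_append, take_succ_cons, take_zero,
      take_succ_eq_append_getElem he]
    exact hU.append (Sublist.refl _)
  · rw [factor_eq_drop_take w (by omega) hγc, hUV, Nat.add_sub_cancel, drop_left' rfl,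
      ← getElem_cons_drop]
    exact hV.cons_cons _

section Transfer

variable [LinearOrder α] [Inhabited α]

theorem mem_desSet_iff_take_or_run {s : List α} {e : ℕ} {P : Prop}
    (hrun : ∀ d, e < d → d < s.length → (d ∈ desSet s ↔ P)) (d : ℕ) :
    d ∈ desSet s ↔ d ∈ desSet (s.take (e + 1)) ∨ (e + 1 ≤ d ∧ d < s.length ∧ P) := by
  rw [desSet_take, Finset.mem_inter, mem_Icc, Nat.add_sub_cancel]
  have hdL : d ∈ desSet s → 1 ≤ d ∧ d < s.length := fun hd => by
    have := mem_Icc.1 (desSet_subset_Icc s hd)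
    omega
  by_cases hde : d ≤ e
  · simp only [show ¬e + 1 ≤ d by omega, false_and, or_false]
    exact ⟨fun h => ⟨h, (hdL h).1, hde⟩, fun h => h.1⟩
  · simp only [hde, and_false, false_or]
    by_cases hdL' : d < s.length
    · rw [hrun d (by omega) hdL']
      exact ⟨fun hP => ⟨by omega, hdL', hP⟩, fun h => h.2.2⟩
    · exact iff_of_false (fun h => hdL' (hdL h).2) (fun h => hdL' h.2.1)

theorem mem_desSet_drop_iff_of_run {s : List α} {e : ℕ} {P : Prop}
    (hrun : ∀ d, e < d → d < s.length → (d ∈ desSet s ↔ P)) (d : ℕ) :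
    d ∈ desSet (s.drop e) ↔ d ∈ Icc 1 ((s.drop e).length - 1) ∧ P := by
  rw [mem_desSet_drop, mem_Icc, length_drop]
  constructor
  · rintro ⟨h1, hmem⟩
    have := mem_Icc.1 (desSet_subset_Icc s hmem)
    exact ⟨⟨h1, by omega⟩, (hrun _ (by omega) (by omega)).1 hmem⟩
  · rintro ⟨⟨h1, h2⟩, hP⟩
    exact ⟨h1, (hrun _ (by omega) (by omega)).2 hP⟩

theorem exists_sublist_take_desSet_eq {w w' : List α} (hw' : w'.Nodup)
    (hrun : ∀ i j, 1 ≤ i → i ≤ j → j ≤ w.length → ∀ r, r <+ factor w i j → IsRun r →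
      ∃ r', r' <+ factor w' i j ∧ desSet r' = desSet r ∧ r'.length = r.length)
    {c : ℕ} (hc : c ≤ w.length) {s : List α} (hs : s <+ w.take c) :
    ∃ t, t <+ w'.take c ∧ desSet t = desSet s ∧ t.length = s.length := by
  rcases Nat.eq_zero_or_pos s.length with hs0 | hspos
  · exact ⟨[], nil_sublist _, by simp [length_eq_zero_iff.1 hs0], by simp [hs0]⟩
  have hc1 : 1 ≤ c := by
    have := hs.length_le
    simp only [length_take] at this
    omega
  set P := s.length - 1 ∈ desSet s
  rcases forall_or_exists_last_not (fun d => d ∈ desSet s ↔ P) (s.length - 1) with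
    hall | ⟨e, he1, heL, hswitch, htail⟩
  · have hfac : ∀ v : List α, factor v 1 c = v.take c := fun v => by
      rw [factor_eq_drop_take v le_rfl hc1, Nat.sub_self, drop_zero]
    have hrun_s := mem_desSet_drop_iff_of_run (s := s) (e := 0) (P := P)
      fun d h1 h2 => hall d h1 (by omega)
    rw [drop_zero] at hrun_s
    rw [← hfac] at hs ⊢
    exact hrun 1 c le_rfl hc1 hc s hs ⟨P, hrun_s⟩
  -- `e` is the last switch of the descent pattern, so `s` is a run from position `e` on.
  have htail' : ∀ d, e < d → d < s.length → (d ∈ desSet s ↔ P) :=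
    fun d h1 h2 => htail d h1 (by omega)
  have heL' : e < s.length - 1 := lt_of_le_of_ne heL (by rintro rfl; exact hswitch Iff.rfl)
  obtain ⟨γ, hγ1, hγc, hbody, htail_sub⟩ :=
    exists_sublist_take_and_sublist_factor hs (by omega : e < s.length)
  obtain ⟨a, ha, hades, halen⟩ := exists_sublist_take_desSet_eq hw' hrun (hγc.trans hc) hbody
  obtain ⟨B, hB, hBdes, hBlen⟩ :=
    hrun γ c hγ1 hγc hc _ htail_sub ⟨P, mem_desSet_drop_iff_of_run htail'⟩
  rw [factor_eq_drop_take w' hγ1 hγc] at hB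
  have hlen_body : a.length = e + 1 := by simp [halen]; omega
  have hlen_tail : B.length = s.length - e := by simp [hBlen]
  obtain ⟨t, ht, htlen, htdes⟩ := exists_sublist_glue (a := a) (B := B) (P := P)
    (by rwa [take_take, min_eq_left hγc]) hB (by omega) (by omega)
    (((hB.trans (drop_sublist _ _)).trans (take_sublist _ _)).nodup hw')
    (by
      rw [hades, hlen_body, Nat.add_sub_cancel, desSet_take, Finset.mem_inter, mem_Icc,
        and_iff_left ⟨he1, le_rfl⟩]
      tauto)
    (fun d => by rw [hBdes, hBlen]; exact mem_desSet_drop_iff_of_run htail' d)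
  refine ⟨t, ht, Finset.ext fun d => ?_, by omega⟩
  rw [htdes, hades, hlen_body, hlen_tail, mem_desSet_iff_take_or_run htail' d,
    show e + 1 + (s.length - e) - 1 = s.length by omega]
termination_by s.length
decreasing_by
  simp only [length_take]
  omega

end Transfer

section Characterization

variable [LinearOrder α] [Inhabited α]

theorem lsD_le_lsD_of_isRun {w w' : List α} (hw' : w'.Nodup)
    (hrun : ∀ i j, 1 ≤ i → i ≤ j → j ≤ w.length → ∀ r, r <+ factor w i j → IsRun r →
      ∃ r', r' <+ factor w' i j ∧ desSet r' = desSet r ∧ r'.length = r.length)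
    (D : Finset ℕ) : lsD w D ≤ lsD w' D := by
  rcases Nat.eq_zero_or_pos (lsD w D) with h0 | hpos
  · exact h0 ▸ Nat.zero_le _
  obtain ⟨s, hs, rfl, hlen⟩ := exists_of_le_lsD hpos le_rfl
  obtain ⟨t, ht, hdes, htlen⟩ :=
    exists_sublist_take_desSet_eq (s := s) hw' hrun le_rfl (by rwa [take_length])
  calc lsD w (desSet s) ≤ s.length := hlen
    _ = t.length := htlen.symm
    _ ≤ lsD w' (desSet s) := hdes ▸ le_lsD (ht.trans (take_sublist _ _))

theorem lsD_le_iff_lis_le_and_lds_le {w w' : List α} {n : ℕ} (hw : w.Nodup) (hw' : w'.Nodup)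
    (hn : w.length = n) (hn' : w'.length = n) :
    (∀ D ⊆ Icc 1 (n - 1), lsD w D ≤ lsD w' D) ↔
      ∀ i j, 1 ≤ i → i ≤ j → j ≤ n →
        lis (factor w i j) ≤ lis (factor w' i j) ∧ lds (factor w i j) ≤ lds (factor w' i j) := by
  subst hn
  have hfactors : ∀ i j, lis (factor w i j) ≤ lis (factor w' i j) ∧
      lds (factor w i j) ≤ lds (factor w' i j) ↔ ∀ r, r <+ factor w i j → IsRun r →
        ∃ r', r' <+ factor w' i j ∧ desSet r' = desSet r ∧ r'.length = r.length :=
    fun i j => lis_le_and_lds_le_iff ((factor_sublist w i j).nodup hw)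
      ((factor_sublist w' i j).nodup hw')
  constructor
  · intro hle i j hi hij hj
    exact (hfactors i j).2 fun r hr _ => exists_sublist_factor_of_lsD_le hn' hle hi hij hj hr
  · intro h D _
    exact lsD_le_lsD_of_isRun hw' (fun i j hi hij hj => (hfactors i j).1 (h i j hi hij hj)) D

end Characterization

theorem word_nodup {n : ℕ} (π : Equiv.Perm (Fin n)) : (word π).Nodup := by
  rw [word, nodup_ofFn]
  exact Fin.val_injective.comp π.injective

theorem length_word {n : ℕ} (π : Equiv.Perm (Fin n)) : (word π).length = n := by
  simp [word]

theorem stmt17 (n : ℕ) (π σ : Equiv.Perm (Fin n)) :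
    (∀ D : Finset ℕ, D ⊆ Finset.Icc 1 (n - 1) → lsD (word π) D = lsD (word σ) D) ↔
      (∀ i j : ℕ, 1 ≤ i → i ≤ j → j ≤ n →
        lis (factor (word π) i j) = lis (factor (word σ) i j) ∧
          lds (factor (word π) i j) = lds (factor (word σ) i j)) := by
  have hπσ := lsD_le_iff_lis_le_and_lds_le (word_nodup π) (word_nodup σ) (length_word π)
    (length_word σ)
  have hσπ := lsD_le_iff_lis_le_and_lds_le (word_nodup σ) (word_nodup π) (length_word σ)
    (length_word π)
  constructor
  · intro h i j hi hij hj
    have h₁ := hπσ.1 (fun D hD => (h D hD).le) i j hi hij hj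
    have h₂ := hσπ.1 (fun D hD => (h D hD).ge) i j hi hij hj
    exact ⟨h₁.1.antisymm h₂.1, h₁.2.antisymm h₂.2⟩
  · intro h D hD
    refine (hπσ.2 (fun i j hi hij hj => ?_) D hD).antisymm (hσπ.2 (fun i j hi hij hj => ?_) D hD)
    exacts [⟨(h i j hi hij hj).1.le, (h i j hi hij hj).2.le⟩,
      ⟨(h i j hi hij hj).1.ge, (h i j hi hij hj).2.ge⟩]
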